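/- Let {X_n} be Banach spaces, U a free ultrafilter on ℕ, and T_n ∈ L(X_n) uniformly bounded. Then v((T_n)_U) = lim_U v(T_n): the numerical radius is exactly preserved by the ultraproduct construction. -/

import Mathlib

open Filter Metric ENNReal

noncomputable def nradius {E : Type*} [SeminormedAddCommGroup E] [NormedSpace ℝ E]
    (T : E →L[ℝ] E) : ℝ :=
  sSup {r : ℝ | ∃ (x : E) (f : E →L[ℝ] ℝ), ‖x‖ = 1 ∧ ‖f‖ = 1 ∧ f x = 1 ∧ r = |f (T x)|}

noncomputable def nindex (E : Type*) [SeminormedAddCommGroup E] [NormedSpace ℝ E] : ℝ :=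
  sInf {r : ℝ | ∃ T : E →L[ℝ] E, ‖T‖ = 1 ∧ r = nradius T}

noncomputable def nullIdeal (X : ℕ → Type*) [∀ n, NormedAddCommGroup (X n)]
    [∀ n, NormedSpace ℝ (X n)] (U : Ultrafilter ℕ) : Submodule ℝ (lp X ∞) where
  carrier := {f | Tendsto (fun n => ‖f n‖) (U : Filter ℕ) (nhds 0)}
  zero_mem' := by
    simpa using (tendsto_const_nhds : Tendsto (fun _ : ℕ => (0 : ℝ)) (U : Filter ℕ) (nhds 0))
  add_mem' := by
    intro f g hf hg
    have h := hf.add hg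
    rw [add_zero] at h
    refine squeeze_zero (fun n => norm_nonneg _) (fun n => ?_) h
    simpa using norm_add_le (f n) (g n)
  smul_mem' := by
    intro c f hf
    have h := hf.const_mul ‖c‖
    rw [mul_zero] at h
    refine squeeze_zero (fun n => norm_nonneg _) (fun n => ?_) h
    simp [norm_smul]

/-!
Norms in the ultraproduct are `U`-limits of the coordinate norms. For `L ≤ v((T_n)_U)`,
near-extremal pairs `(x_n, f_n)` for `v(T_n)` assemble into a unit vector of the ultraproduct and
a `U`-limit functional of norm one on it. For `v((T_n)_U) ≤ L`, a supporting functional at `y`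
gives `(1 - |α| v(T)) ‖y‖ ≤ ‖y + α T y‖`; applied with `-α` at `y = x + α T x` this yields
`(1 - |α| v(T)) ‖x + α T x‖ ≤ (1 + α² ‖T‖²) ‖x‖`, an estimate that passes to the ultraproduct.
Comparing it with `1 + α F (T x) = F (x + α T x) ≤ ‖x + α T x‖` as `α → 0` bounds `|F (T x)|`
by `L`.
-/

section NumericalRadius

variable {E : Type*}

section Seminormed

variable [SeminormedAddCommGroup E] [NormedSpace ℝ E]

lemma bddAbove_nradius_set (T : E →L[ℝ] E) :
    BddAbove {r : ℝ | ∃ (x : E) (f : E →L[ℝ] ℝ), ‖x‖ = 1 ∧ ‖f‖ = 1 ∧ f x = 1 ∧ r = |f (T x)|} := by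
  refine ⟨‖T‖, ?_⟩
  rintro r ⟨x, f, hx, hf, -, rfl⟩
  calc |f (T x)| = ‖f (T x)‖ := (Real.norm_eq_abs _).symm
    _ ≤ ‖f‖ * (‖T‖ * ‖x‖) := f.le_opNorm_of_le (T.le_opNorm x)
    _ = ‖T‖ := by rw [hx, hf, one_mul, mul_one]

lemma abs_apply_le_nradius (T : E →L[ℝ] E) {x : E} {f : E →L[ℝ] ℝ}
    (hx : ‖x‖ = 1) (hf : ‖f‖ = 1) (hfx : f x = 1) : |f (T x)| ≤ nradius T :=
  le_csSup (bddAbove_nradius_set T) ⟨x, f, hx, hf, hfx, rfl⟩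

lemma nradius_nonneg (T : E →L[ℝ] E) : 0 ≤ nradius T :=
  Real.sSup_nonneg fun _ ⟨_, _, _, _, _, hr⟩ => hr ▸ abs_nonneg _

lemma exists_lt_abs_apply_of_lt_nradius (T : E →L[ℝ] E) {a : ℝ} (ha : 0 ≤ a)
    (h : a < nradius T) :
    ∃ (x : E) (f : E →L[ℝ] ℝ), ‖x‖ = 1 ∧ ‖f‖ = 1 ∧ f x = 1 ∧ a < |f (T x)| := by
  by_contra! hle
  exact h.not_ge <| Real.sSup_le (fun _ ⟨x, f, hx, hf, hfx, hr⟩ => hr ▸ hle x f hx hf hfx) ha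

lemma apply_le_norm_of_norm_le_one {F : E →L[ℝ] ℝ} (hF : ‖F‖ ≤ 1) (z : E) : F z ≤ ‖z‖ :=
  (le_abs_self _).trans (by simpa using F.le_of_opNorm_le hF z)

lemma abs_apply_le_nradius_mul_norm (T : E →L[ℝ] E) {y : E} {f : E →L[ℝ] ℝ}
    (hf : ‖f‖ ≤ 1) (hfy : f y = ‖y‖) : |f (T y)| ≤ nradius T * ‖y‖ := by
  rcases eq_or_ne ‖y‖ 0 with hy | hy
  · rw [hy, mul_zero, ← Real.norm_eq_abs]
    simpa [hy] using f.le_opNorm_of_le (T.le_opNorm y)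
  · have hf1 : ‖f‖ = 1 := by
      refine hf.antisymm ((le_mul_iff_one_le_left ((norm_nonneg y).lt_of_ne' hy)).1 ?_)
      calc ‖y‖ = ‖f y‖ := by rw [hfy, norm_norm]
        _ ≤ ‖f‖ * ‖y‖ := f.le_opNorm y
    have key := abs_apply_le_nradius T (x := ‖y‖⁻¹ • y) (f := f)
      (by rw [norm_smul, norm_inv, norm_norm, inv_mul_cancel₀ hy]) hf1
      (by rw [map_smul, hfy, smul_eq_mul, inv_mul_cancel₀ hy])
    rwa [map_smul, map_smul, smul_eq_mul, abs_mul, abs_inv, abs_norm, inv_mul_le_iff₀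
      ((norm_nonneg y).lt_of_ne' hy), mul_comm] at key

end Seminormed

section Normed

variable [NormedAddCommGroup E] [NormedSpace ℝ E]

lemma one_sub_abs_mul_nradius_mul_norm_le (T : E →L[ℝ] E) (α : ℝ) (y : E) :
    (1 - |α| * nradius T) * ‖y‖ ≤ ‖y + α • T y‖ := by
  obtain ⟨f, hf, hfy⟩ := exists_dual_vector'' ℝ y
  replace hfy : f y = ‖y‖ := hfy
  have hαTy : |α * f (T y)| ≤ |α| * (nradius T * ‖y‖) := by
    rw [abs_mul]
    exact mul_le_mul_of_nonneg_left (abs_apply_le_nradius_mul_norm T hf hfy) (abs_nonneg α)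
  calc (1 - |α| * nradius T) * ‖y‖ ≤ f (y + α • T y) := by
        rw [map_add, map_smul, hfy, smul_eq_mul]
        linarith [neg_abs_le (α * f (T y))]
    _ ≤ ‖y + α • T y‖ := apply_le_norm_of_norm_le_one hf _

lemma one_sub_abs_mul_nradius_mul_norm_add_smul_le (T : E →L[ℝ] E) (α : ℝ) (x : E) :
    (1 - |α| * nradius T) * ‖x + α • T x‖ ≤ (1 + α ^ 2 * ‖T‖ ^ 2) * ‖x‖ := by
  have hback := one_sub_abs_mul_nradius_mul_norm_le T (-α) (x + α • T x)
  have hexpand : x + α • T x + (-α) • T (x + α • T x) = x - (α * α) • T (T x) := by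
    simp only [map_add, map_smul]
    module
  rw [abs_neg, hexpand] at hback
  have hTTx : ‖T (T x)‖ ≤ ‖T‖ ^ 2 * ‖x‖ := by
    rw [sq, mul_assoc]
    exact T.le_opNorm_of_le (T.le_opNorm x)
  calc (1 - |α| * nradius T) * ‖x + α • T x‖ ≤ ‖x - (α * α) • T (T x)‖ := hback
    _ ≤ ‖x‖ + α ^ 2 * ‖T (T x)‖ := by
        rw [← sq]
        exact (norm_sub_le _ _).trans_eq (by rw [norm_smul, Real.norm_eq_abs, abs_sq])
    _ ≤ (1 + α ^ 2 * ‖T‖ ^ 2) * ‖x‖ := by linarith [mul_le_mul_of_nonneg_left hTTx (sq_nonneg α)]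

end Normed

lemma abs_apply_le_of_forall_norm_add_smul_le [SeminormedAddCommGroup E] [NormedSpace ℝ E]
    (S : E →L[ℝ] E) {x : E} {F : E →L[ℝ] ℝ} (hF : ‖F‖ ≤ 1) (hFx : F x = 1) {L K : ℝ}
    (h : ∀ α : ℝ, (1 - |α| * L) * ‖x + α • S x‖ ≤ 1 + α ^ 2 * K) : |F (S x)| ≤ L := by
  set a := |F (S x)| with ha_def
  have hsmall : ∀ t : ℝ, 0 < t → t * L < 1 → a ≤ L + t * (a * L + K) := by
    intro t ht htL
    obtain ⟨α, hα, hαa⟩ : ∃ α : ℝ, |α| = t ∧ α * F (S x) = t * a := by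
      rcases abs_cases (F (S x)) with ⟨ha, -⟩ | ⟨ha, -⟩
      · exact ⟨t, abs_of_pos ht, by rw [ha_def, ha]⟩
      · exact ⟨-t, by rw [abs_neg, abs_of_pos ht], by rw [ha_def, ha]; ring⟩
    have hlow : 1 + t * a ≤ ‖x + α • S x‖ := by
      calc 1 + t * a = F (x + α • S x) := by rw [map_add, map_smul, hFx, smul_eq_mul, hαa]
        _ ≤ ‖x + α • S x‖ := apply_le_norm_of_norm_le_one hF _
    have hup := h α
    rw [hα, ← sq_abs α, hα] at hup
    have hmul : t * (a - L - t * (a * L + K)) ≤ 0 := by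
      nlinarith [mul_le_mul_of_nonneg_left hlow (sub_nonneg.2 htL.le)]
    linarith [nonpos_of_mul_nonpos_right hmul ht]
  have hlim : Tendsto (fun t : ℝ => L + t * (a * L + K)) (nhdsWithin 0 (Set.Ioi 0)) (nhds L) := by
    refine tendsto_nhdsWithin_of_tendsto_nhds ?_
    simpa using ((continuous_id.mul continuous_const).const_add L).tendsto (0 : ℝ)
  have htL : ∀ᶠ t : ℝ in nhdsWithin 0 (Set.Ioi 0), t * L < 1 := by
    refine nhdsWithin_le_nhds (Tendsto.eventually_lt_const zero_lt_one ?_)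
    simpa using (continuous_id.mul continuous_const).tendsto (0 : ℝ) (f := fun t : ℝ => t * L)
  exact ge_of_tendsto hlim <| by
    filter_upwards [self_mem_nhdsWithin, htL] with t ht htL using hsmall t ht htL

end NumericalRadius

lemma Ultrafilter.exists_tendsto_of_abs_le {α : Type*} (U : Ultrafilter α) {u : α → ℝ} {C : ℝ}
    (h : ∀ a, |u a| ≤ C) : ∃ c, Tendsto u U (nhds c) := by
  obtain ⟨c, -, hc⟩ := isCompact_Icc.ultrafilter_le_nhds (U.map u)
    (le_principal_iff.2 (mem_map.2 (univ_mem' fun a => abs_le.1 (h a))))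
  exact ⟨c, hc⟩

lemma memℓp_infty_of_norm_le {ι : Type*} {E : ι → Type*} [∀ i, NormedAddCommGroup (E i)]
    {f : ∀ i, E i} (C : ℝ) (h : ∀ i, ‖f i‖ ≤ C) : Memℓp f ∞ :=
  memℓp_infty ⟨C, by rintro - ⟨i, rfl⟩; exact h i⟩

section Ultraproduct

variable {X : ℕ → Type*} [∀ n, NormedAddCommGroup (X n)] [∀ n, NormedSpace ℝ (X n)]
  {U : Ultrafilter ℕ}

local notation "𝒳" => lp X ∞ ⧸ nullIdeal X U

lemma norm_mk_le_of_eventually_norm_le (g : lp X ∞) {c : ℝ} (hc : 0 ≤ c)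
    (h : ∀ᶠ n in (U : Filter ℕ), ‖g n‖ ≤ c) : ‖(Submodule.Quotient.mk g : 𝒳)‖ ≤ c := by
  classical
  let g' : lp X ∞ := ⟨fun n => if ‖g n‖ ≤ c then g n else 0,
    memℓp_infty_of_norm_le c fun n => by split_ifs with hn <;> simp [hn, hc]⟩
  have hg'n : ∀ n, g' n = if ‖g n‖ ≤ c then g n else 0 := fun n => rfl
  have hg' : g - g' ∈ nullIdeal X U := by
    refine tendsto_const_nhds.congr' (h.mono fun n hn => ?_)
    show (0 : ℝ) = ‖(g - g') n‖
    rw [lp.coeFn_sub, Pi.sub_apply, hg'n, if_pos hn, sub_self, norm_zero]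
  rw [(Submodule.Quotient.eq _).2 hg']
  refine (Submodule.Quotient.norm_mk_le _ _).trans (lp.norm_le_of_forall_le hc fun n => ?_)
  rw [hg'n]
  split_ifs with hn <;> simp [hn, hc]

lemma tendsto_norm_apply_nhds_norm_mk (g : lp X ∞) :
    Tendsto (fun n => ‖g n‖) (U : Filter ℕ) (nhds ‖(Submodule.Quotient.mk g : 𝒳)‖) := by
  refine tendsto_order.2 ⟨fun a ha => ?_, fun b hb => ?_⟩
  · rcases lt_or_ge a 0 with ha0 | ha0
    · exact Eventually.of_forall fun n => ha0.trans_le (norm_nonneg _)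
    · by_contra hne
      have hle : ∀ᶠ n in (U : Filter ℕ), ‖g n‖ ≤ a := by
        simpa only [not_lt] using Ultrafilter.eventually_not.2 hne
      exact ha.not_ge (norm_mk_le_of_eventually_norm_le g ha0 hle)
  · obtain ⟨g', hg', hg'b⟩ := Submodule.Quotient.norm_mk_lt (Submodule.Quotient.mk g : 𝒳)
      (sub_pos.2 hb)
    have hnull : Tendsto (fun n => ‖(g - g') n‖) (U : Filter ℕ) (nhds 0) :=
      (Submodule.Quotient.eq _).1 hg'.symm
    filter_upwards [hnull.eventually_lt_const (show 0 < b - ‖g'‖ by linarith)] with n hn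
    calc ‖g n‖ ≤ ‖g' n‖ + ‖(g - g') n‖ := by
          simpa using norm_add_le (g' n) ((g - g') n)
      _ < b := by linarith [lp.norm_apply_le_norm ENNReal.top_ne_zero g' n]

lemma exists_ultraproduct_dual (f : ∀ n, X n →L[ℝ] ℝ) {C : ℝ} (hf : ∀ n, ‖f n‖ ≤ C) :
    ∃ F : 𝒳 →L[ℝ] ℝ, ‖F‖ ≤ C ∧ ∀ g : lp X ∞,
      Tendsto (fun n => f n (g n)) (U : Filter ℕ) (nhds (F (Submodule.Quotient.mk g))) := by
  have hC : 0 ≤ C := (norm_nonneg _).trans (hf 0)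
  have hfg : ∀ (g : lp X ∞) n, |f n (g n)| ≤ C * ‖g n‖ := fun g n => by
    simpa only [Real.norm_eq_abs] using (f n).le_of_opNorm_le (hf n) (g n)
  choose φ hφ using fun g : lp X ∞ => U.exists_tendsto_of_abs_le fun n =>
    (hfg g n).trans (mul_le_mul_of_nonneg_left (lp.norm_apply_le_norm ENNReal.top_ne_zero g n) hC)
  let φL : lp X ∞ →ₗ[ℝ] ℝ :=
    { toFun := φ
      map_add' := fun g g' => tendsto_nhds_unique (hφ (g + g')) <|
        ((hφ g).add (hφ g')).congr fun n => by simp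
      map_smul' := fun r g => tendsto_nhds_unique (hφ (r • g)) <|
        ((hφ g).const_mul r).congr fun n => by simp }
  have hφ_le : ∀ g, |φ g| ≤ C * ‖(Submodule.Quotient.mk g : 𝒳)‖ := fun g =>
    le_of_tendsto_of_tendsto' (hφ g).abs ((tendsto_norm_apply_nhds_norm_mk g).const_mul C)
      (hfg g)
  have hker : nullIdeal X U ≤ LinearMap.ker φL := fun g hg => by
    have hφg := hφ_le g
    rw [(Submodule.Quotient.mk_eq_zero _).2 hg, norm_zero, mul_zero] at hφg
    exact abs_nonpos_iff.1 hφg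
  refine ⟨((nullIdeal X U).liftQ φL hker).mkContinuous C fun q => ?_,
    LinearMap.mkContinuous_norm_le _ hC _, hφ⟩
  obtain ⟨g, rfl⟩ := Submodule.Quotient.mk_surjective _ q
  exact hφ_le g

def IsUltraproductOp (T : ∀ n, X n →L[ℝ] X n) (Tq : 𝒳 →L[ℝ] 𝒳) : Prop :=
  ∀ g h : lp X ∞, (∀ n, h n = T n (g n)) → Tq (Submodule.Quotient.mk g) = Submodule.Quotient.mk h

variable {T : ∀ n, X n →L[ℝ] X n} {M : ℝ}

lemma exists_apply_mk_eq_mk (hM : ∀ n, ‖T n‖ ≤ M) {Tq : 𝒳 →L[ℝ] 𝒳}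
    (hTq : IsUltraproductOp T Tq) (g : lp X ∞) :
    ∃ h : lp X ∞, Tq (Submodule.Quotient.mk g) = Submodule.Quotient.mk h ∧
      ∀ n, h n = T n (g n) := by
  have hmem : Memℓp (fun n => T n (g n)) ∞ := memℓp_infty_of_norm_le (M * ‖g‖) fun n =>
    (T n).le_of_opNorm_le_of_le (hM n) (lp.norm_apply_le_norm ENNReal.top_ne_zero g n)
  exact ⟨⟨_, hmem⟩, hTq g ⟨_, hmem⟩ fun n => rfl, fun n => rfl⟩

lemma one_sub_abs_mul_mul_norm_add_smul_le_of_tendsto (hM : ∀ n, ‖T n‖ ≤ M) {Tq : 𝒳 →L[ℝ] 𝒳}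
    (hTq : IsUltraproductOp T Tq) {L : ℝ}
    (hL : Tendsto (fun n => nradius (T n)) (U : Filter ℕ) (nhds L)) (α : ℝ) (x : 𝒳) :
    (1 - |α| * L) * ‖x + α • Tq x‖ ≤ (1 + α ^ 2 * M ^ 2) * ‖x‖ := by
  obtain ⟨g, rfl⟩ := Submodule.Quotient.mk_surjective _ x
  obtain ⟨h, hTg, hh⟩ := exists_apply_mk_eq_mk hM hTq g
  rw [hTg, ← Submodule.Quotient.mk_smul, ← Submodule.Quotient.mk_add]
  refine le_of_tendsto_of_tendsto'
    (((hL.const_mul |α|).const_sub 1).mul (tendsto_norm_apply_nhds_norm_mk _))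
    ((tendsto_norm_apply_nhds_norm_mk g).const_mul _) fun n => ?_
  calc (1 - |α| * nradius (T n)) * ‖(g + α • h) n‖
      = (1 - |α| * nradius (T n)) * ‖g n + α • T n (g n)‖ := by
        rw [lp.coeFn_add, lp.coeFn_smul, Pi.add_apply, Pi.smul_apply, hh]
    _ ≤ (1 + α ^ 2 * ‖T n‖ ^ 2) * ‖g n‖ :=
        one_sub_abs_mul_nradius_mul_norm_add_smul_le (T n) α (g n)
    _ ≤ (1 + α ^ 2 * M ^ 2) * ‖g n‖ := by gcongr; exact hM n

lemma nradius_le_of_tendsto (hM : ∀ n, ‖T n‖ ≤ M) {Tq : 𝒳 →L[ℝ] 𝒳}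
    (hTq : IsUltraproductOp T Tq) {L : ℝ}
    (hL : Tendsto (fun n => nradius (T n)) (U : Filter ℕ) (nhds L)) :
    nradius Tq ≤ L := by
  refine Real.sSup_le (fun _ ⟨x, F, hx, hF, hFx, hr⟩ => hr ▸ ?_)
    (ge_of_tendsto' hL fun n => nradius_nonneg _)
  refine abs_apply_le_of_forall_norm_add_smul_le Tq hF.le hFx (K := M ^ 2) fun α => ?_
  simpa only [hx, mul_one] using one_sub_abs_mul_mul_norm_add_smul_le_of_tendsto hM hTq hL α x

lemma le_nradius_of_tendsto (hM : ∀ n, ‖T n‖ ≤ M) {Tq : 𝒳 →L[ℝ] 𝒳}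
    (hTq : IsUltraproductOp T Tq) {L : ℝ}
    (hL : Tendsto (fun n => nradius (T n)) (U : Filter ℕ) (nhds L)) :
    L ≤ nradius Tq := by
  refine le_of_forall_pos_le_add fun ε hε => ?_
  rcases lt_or_ge (L - ε) 0 with hneg | hpos
  · linarith [nradius_nonneg Tq]
  have hwit : ∀ n, ∃ (x : X n) (f : X n →L[ℝ] ℝ), ‖x‖ ≤ 1 ∧ ‖f‖ ≤ 1 ∧
      (L - ε < nradius (T n) → ‖x‖ = 1 ∧ f x = 1 ∧ L - ε < |f (T n x)|) := fun n => by
    by_cases hn : L - ε < nradius (T n)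
    · obtain ⟨x, f, hx, hf, hfx, hlt⟩ := exists_lt_abs_apply_of_lt_nradius (T n) hpos hn
      exact ⟨x, f, hx.le, hf.le, fun _ => ⟨hx, hfx, hlt⟩⟩
    · exact ⟨0, 0, by simp, by simp, hn.elim⟩
  choose x f hx hf hgood using hwit
  let g : lp X ∞ := ⟨x, memℓp_infty_of_norm_le 1 hx⟩
  obtain ⟨h, hTg, hh⟩ := exists_apply_mk_eq_mk hM hTq g
  obtain ⟨F, hF, hFlim⟩ := exists_ultraproduct_dual f hf
  have hev := (hL.eventually_const_lt (sub_lt_self L hε)).mono hgood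
  have hnorm : ‖(Submodule.Quotient.mk g : 𝒳)‖ = 1 :=
    tendsto_nhds_unique (tendsto_norm_apply_nhds_norm_mk g)
      (tendsto_const_nhds.congr' (hev.mono fun n hn => hn.1.symm))
  have hFg : F (Submodule.Quotient.mk g) = 1 :=
    tendsto_nhds_unique (hFlim g) (tendsto_const_nhds.congr' (hev.mono fun n hn => hn.2.1.symm))
  have hF1 : ‖F‖ = 1 :=
    hF.antisymm (by simpa [hFg, hnorm] using F.le_opNorm (Submodule.Quotient.mk g))
  have hlow : L - ε ≤ |F (Tq (Submodule.Quotient.mk g))| := by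
    rw [hTg]
    exact ge_of_tendsto (hFlim h).abs (hev.mono fun n hn => by rw [hh]; exact hn.2.2.le)
  linarith [abs_apply_le_nradius Tq hnorm hF1 hFg]

end Ultraproduct

theorem ultraproduct_nradius_eq_general
    (X : ℕ → Type*) [∀ n, NormedAddCommGroup (X n)] [∀ n, NormedSpace ℝ (X n)]
    (U : Ultrafilter ℕ)
    (T : ∀ n, X n →L[ℝ] X n) (M : ℝ) (hM : ∀ n, ‖T n‖ ≤ M)
    (Tq : (lp X ∞ ⧸ nullIdeal X U) →L[ℝ] (lp X ∞ ⧸ nullIdeal X U))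
    (hTq : ∀ g h : lp X ∞, (∀ n, h n = T n (g n)) →
      Tq (Submodule.Quotient.mk g) = Submodule.Quotient.mk h)
    (L : ℝ) (hL : Tendsto (fun n => nradius (T n)) (U : Filter ℕ) (nhds L)) :
    nradius Tq = L :=
  (nradius_le_of_tendsto hM hTq hL).antisymm (le_nradius_of_tendsto hM hTq hL)

theorem ultraproduct_nradius_eq
    (X : ℕ → Type*) [∀ n, NormedAddCommGroup (X n)] [∀ n, NormedSpace ℝ (X n)]
    [∀ n, CompleteSpace (X n)]
    (U : Ultrafilter ℕ) (hU : (U : Filter ℕ) ≤ Filter.cofinite)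
    (T : ∀ n, X n →L[ℝ] X n) (M : ℝ) (hM : ∀ n, ‖T n‖ ≤ M)
    (Tq : (lp X ∞ ⧸ nullIdeal X U) →L[ℝ] (lp X ∞ ⧸ nullIdeal X U))
    (hTq : ∀ g h : lp X ∞, (∀ n, h n = T n (g n)) →
      Tq (Submodule.Quotient.mk g) = Submodule.Quotient.mk h)
    (L : ℝ) (hL : Tendsto (fun n => nradius (T n)) (U : Filter ℕ) (nhds L)) :
    nradius Tq = L :=
  ultraproduct_nradius_eq_general X U T M hM Tq hTq L hL
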